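/- Let V ⊆ ℂⁿ be open, Φ : V → ℝ, and let Ψ be a function, holomorphic on an open set U ⊆ ℂⁿ × ℂⁿ containing all points (x, conj y) with x, y ∈ V, such that Ψ(y, conj y) = Φ(y) for all y ∈ V. Let C₀ > 0 and δ > 0, and assume 2 Re Ψ(x, conj y) ≤ Φ(x) + Φ(y) − (1/C₀)|x−y|² for all x, y ∈ V. For z ∈ V define G_z(x, x̃, y, ỹ) := 2 Re Ψ(x, ỹ) − 2 Re Ψ(y, ỹ) + Φ(y) + Φ(conj x̃) − δ|x̃ − conj z|² − 2 Re Ψ(x, x̃). Then there exists C > 0, depending only on C₀ and δ, such that for all x, y, z ∈ V: G_z(x, conj x, y, conj y) ≤ −(1/C)(|x−z|² + |y−z|²); moreover G_z(z, conj z, z, conj z) = 0. -/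

import Mathlib

/-!
On the anti-diagonal `x̃ = conj x, ỹ = conj y` the identity `Ψ(y, conj y) = Φ(y)` collapses
`G_z` to `2 Re Ψ(x, conj y) − Φ(x) − Φ(y) − δ|x − z|²`, which the upper bound on `Re Ψ` makes
at most `−|x − y|²/C₀ − δ|x − z|²`. The missing `|y − z|²` is recovered from
`|y − z|² ≤ 2|x − y|² + 2|x − z|²`, so `C = 2C₀ + 3/δ` works.
-/

open Complex

noncomputable section

/-- `ℂⁿ` with its Euclidean (Hermitian) norm. -/
abbrev En (n : ℕ) := EuclideanSpace ℂ (Fin n)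

/-- Componentwise complex conjugation on `ℂⁿ`. -/
def conjV (n : ℕ) (x : En n) : En n :=
  (WithLp.equiv 2 (Fin n → ℂ)).symm fun j => (starRingEnd ℂ) (x j)

/-- The plurisubharmonic weight
`G_z(x, x̃, y, ỹ) = 2ReΨ(x,ỹ) − 2ReΨ(y,ỹ) + Φ(y) + Φ(conj x̃) − δ|x̃ − conj z|² − 2ReΨ(x,x̃)`. -/
def Gfun (n : ℕ) (Ψ : En n × En n → ℂ) (Φ : En n → ℝ) (δ : ℝ) (z x xt y yt : En n) : ℝ :=
  2 * (Ψ (x, yt)).re - 2 * (Ψ (y, yt)).re + Φ y + Φ (conjV n xt)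
    - δ * ‖xt - conjV n z‖ ^ 2 - 2 * (Ψ (x, xt)).re

lemma conjV_conjV (n : ℕ) (x : En n) : conjV n (conjV n x) = x := by
  ext j; simp [conjV]

lemma norm_conjV_sub_conjV (n : ℕ) (x y : En n) : ‖conjV n x - conjV n y‖ = ‖x - y‖ := by
  simp [EuclideanSpace.norm_eq, conjV, ← map_sub]

lemma sq_norm_sub_le {E : Type*} [SeminormedAddCommGroup E] (x y z : E) :
    ‖y - z‖ ^ 2 ≤ 2 * (‖x - y‖ ^ 2 + ‖x - z‖ ^ 2) :=
  calc ‖y - z‖ ^ 2 ≤ (‖x - y‖ + ‖x - z‖) ^ 2 := by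
        gcongr
        simpa only [norm_sub_rev y x] using norm_sub_le_norm_sub_add_norm_sub y x z
    _ ≤ 2 * (‖x - y‖ ^ 2 + ‖x - z‖ ^ 2) := add_sq_le

lemma Gfun_conjV_conjV {n : ℕ} {Ψ : En n × En n → ℂ} {Φ : En n → ℝ} (δ : ℝ) {x y : En n}
    (hx : Ψ (x, conjV n x) = Φ x) (hy : Ψ (y, conjV n y) = Φ y) (z : En n) :
    Gfun n Ψ Φ δ z x (conjV n x) y (conjV n y)
      = 2 * (Ψ (x, conjV n y)).re - Φ x - Φ y - δ * ‖x - z‖ ^ 2 := by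
  simp only [Gfun, hx, hy, ofReal_re, conjV_conjV, norm_conjV_sub_conjV]
  ring

theorem statement14_general (n : ℕ)
    (V : Set (En n))
    (Φ : En n → ℝ)
    (Ψ : En n × En n → ℂ)
    (hpol : ∀ y ∈ V, Ψ (y, conjV n y) = (Φ y : ℂ))
    (C₀ δ : ℝ) (hC₀ : 0 < C₀) (hδ : 0 < δ)
    (hub : ∀ x ∈ V, ∀ y ∈ V,
      2 * (Ψ (x, conjV n y)).re ≤ Φ x + Φ y - (1/C₀) * ‖x - y‖ ^ 2) :
    ∃ C : ℝ, 0 < C ∧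
      (∀ x ∈ V, ∀ y ∈ V, ∀ z ∈ V,
        Gfun n Ψ Φ δ z x (conjV n x) y (conjV n y)
          ≤ -(1/C) * (‖x - z‖ ^ 2 + ‖y - z‖ ^ 2)) ∧
      (∀ z ∈ V, Gfun n Ψ Φ δ z z (conjV n z) z (conjV n z) = 0) := by
  refine ⟨2 * C₀ + 3 / δ, by positivity, fun x hx y hy z _ => ?_, fun z hz => ?_⟩
  · set ε := 1 / (2 * C₀ + 3 / δ)
    have hε : 0 < ε := by positivity
    have h2ε : 2 * ε ≤ 1 / C₀ := by
      rw [mul_one_div, div_le_div_iff₀ (by positivity) hC₀]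
      linarith [div_pos three_pos hδ]
    have h3ε : 3 * ε ≤ δ := by
      rw [mul_one_div, div_le_iff₀ (by positivity), mul_add, mul_div_cancel₀ _ hδ.ne']
      linarith [mul_pos hδ hC₀]
    rw [Gfun_conjV_conjV δ (hpol x hx) (hpol y hy)]
    linarith [hub x hx y hy, mul_le_mul_of_nonneg_left (sq_norm_sub_le x y z) hε.le,
      mul_le_mul_of_nonneg_right h2ε (sq_nonneg ‖x - y‖),
      mul_le_mul_of_nonneg_right h3ε (sq_nonneg ‖x - z‖)]
  · rw [Gfun_conjV_conjV δ (hpol z hz) (hpol z hz), hpol z hz]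
    simp only [ofReal_re, sub_self, norm_zero]
    ring

/-- the anti-diagonal contour `{x̃ = conj x, ỹ = conj y}` is a good contour
for `G_z`: `G_z(x, conj x, y, conj y) ≤ −(1/C)(|x−z|² + |y−z|²)`, and the critical value
vanishes: `G_z(z, conj z, z, conj z) = 0`. -/
theorem statement14 (n : ℕ)
    (V : Set (En n)) (hV : IsOpen V)
    (Φ : En n → ℝ)
    (Ψ : En n × En n → ℂ) (U : Set (En n × En n)) (hU : IsOpen U)
    (hΨ : DifferentiableOn ℂ Ψ U)
    (hsub : ∀ x ∈ V, ∀ y ∈ V, (x, conjV n y) ∈ U)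
    (hpol : ∀ y ∈ V, Ψ (y, conjV n y) = (Φ y : ℂ))
    (C₀ δ : ℝ) (hC₀ : 0 < C₀) (hδ : 0 < δ)
    (hub : ∀ x ∈ V, ∀ y ∈ V,
      2 * (Ψ (x, conjV n y)).re ≤ Φ x + Φ y - (1/C₀) * ‖x - y‖ ^ 2) :
    ∃ C : ℝ, 0 < C ∧
      (∀ x ∈ V, ∀ y ∈ V, ∀ z ∈ V,
        Gfun n Ψ Φ δ z x (conjV n x) y (conjV n y)
          ≤ -(1/C) * (‖x - z‖ ^ 2 + ‖y - z‖ ^ 2)) ∧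
      (∀ z ∈ V, Gfun n Ψ Φ δ z z (conjV n z) z (conjV n z) = 0) :=
  statement14_general n V Φ Ψ hpol C₀ δ hC₀ hδ hub
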